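/- Let A : ℝ → ℝ be continuously differentiable, suppose there is a₀ > 0 with A(x) ≤ −a₀ for all x ∈ ℝ, suppose ∫_ℝ (1 + |t|)·|A′(t)| dt < ∞, and let A₊ = lim_{x→+∞} A(x) and A₋ = lim_{x→−∞} A(x). Then there exists a differentiable function r₀ : ℝ → ℝ with r₀(x) > 0 for all x, r₀ bounded on ℝ, satisfying r₀′(x) = A(x)/r₀(x) + 1 for all x ∈ ℝ, and such that r₀(x) → −A₊ = |A₊| as x → +∞ and r₀(x) → −A₋ = |A₋| as x → −∞. -/

import Mathlib

/-!
Let `-C ≤ A ≤ -a₀` (a continuous `A` with limits at `±∞` is bounded) and `μ ≥ C / a₀²`. Writing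
`q = r - (1 + A / r) / μ`, the equation `r' = A / r + 1` becomes `r' = μ (r - q)`, whose bounded
solutions are the fixed points of `r ↦ ∫₀^∞ μ e^{-μ s} q (x + s) ds`. On `[a₀, C]` the map
`u ↦ u - (1 + a / u) / μ` is monotone, preserves `[a₀, C]` and is Lipschitz with constant
`1 - a₀ / (μ C²) < 1`, so Banach's fixed point theorem on bounded continuous functions gives a
solution with values in `[a₀, C]`. The limits come for free: the closed set of functions tending
to `-A(±∞)` at `±∞` is invariant, since `-a` is a fixed point of `u ↦ u - (1 + a / u) / μ` and
exponential averaging preserves limits.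
-/

open MeasureTheory Filter
open Set Real Topology
open scoped BoundedContinuousFunction

lemma BoundedContinuousFunction.isClosed_setOf_tendsto {α β : Type*} [TopologicalSpace α]
    [PseudoMetricSpace β] (l : Filter α) (c : β) :
    IsClosed {f : α →ᵇ β | Tendsto f l (𝓝 c)} := by
  refine isClosed_of_closure_subset fun f hf => ?_
  obtain ⟨F, hFS, hFf⟩ := mem_closure_iff_seq_limit.mp hf
  exact (tendsto_iff_tendstoUniformly.mp hFf).tendsto_of_eventually_tendsto
    (Eventually.of_forall hFS) tendsto_const_nhds

lemma Continuous.exists_abs_le_of_tendsto {A : ℝ → ℝ} (hA : Continuous A) {a b : ℝ}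
    (htop : Tendsto A atTop (𝓝 a)) (hbot : Tendsto A atBot (𝓝 b)) : ∃ C, ∀ x, |A x| ≤ C := by
  obtain ⟨C, hC⟩ := isBounded_iff_forall_norm_le.mp
    (hA.isBounded_range_iff_isBigO_atTop_atBot.mpr ⟨htop.isBigO_one ℝ, hbot.isBigO_one ℝ⟩)
  exact ⟨C, fun x => hC _ (mem_range_self x)⟩

lemma setIntegral_Ioi_zero_comp_add {E : Type*} [NormedAddCommGroup E] [NormedSpace ℝ E]
    (f : ℝ → E) (x : ℝ) : ∫ s in Ioi 0, f (x + s) = ∫ t in Ioi x, f t := by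
  rw [← integral_indicator measurableSet_Ioi, ← integral_indicator measurableSet_Ioi]
  rw [← integral_add_left_eq_self ((Ioi x).indicator f) x]
  congr 1
  ext s
  simp only [indicator_apply, mem_Ioi, lt_add_iff_pos_right]

lemma hasDerivAt_setIntegral_Ioi {k : ℝ → ℝ} (hk : Continuous k)
    (hki : ∀ c, IntegrableOn k (Ioi c)) (x : ℝ) :
    HasDerivAt (fun y => ∫ t in Ioi y, k t) (-k x) x := by
  have hsplit : (fun y => ∫ t in Ioi y, k t) = fun y => (∫ t in Ioi x, k t) - ∫ t in x..y, k t := by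
    ext y
    rw [← intervalIntegral.integral_Ioi_sub_Ioi' (hki x) (hki y), sub_sub_cancel]
  rw [hsplit]
  exact (hk.integral_hasStrictDerivAt x x).hasDerivAt.const_sub _

section ExpAverage

variable {μ B : ℝ} {g : ℝ → ℝ}

noncomputable def expAverage (μ : ℝ) (g : ℝ → ℝ) (x : ℝ) : ℝ :=
  ∫ s in Ioi 0, μ * exp (-μ * s) * g (x + s)

lemma integral_mul_exp_neg_mul_Ioi (hμ : 0 < μ) : ∫ s in Ioi (0 : ℝ), μ * exp (-μ * s) = 1 := by
  rw [integral_const_mul, integral_exp_mul_Ioi (neg_lt_zero.mpr hμ), mul_zero, exp_zero]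
  field_simp

lemma integrableOn_mul_exp_neg_mul (hμ : 0 < μ) (hg : Continuous g) (hB : ∀ t, |g t| ≤ B)
    (c : ℝ) : IntegrableOn (fun s => μ * exp (-μ * s) * g s) (Ioi c) :=
  ((exp_neg_integrableOn_Ioi c hμ).const_mul μ).mul_bdd hg.aestronglyMeasurable (ae_of_all _ hB)

variable (hμ : 0 < μ)
include hμ

lemma integrableOn_mul_exp_neg_mul_comp_add (hg : Continuous g) (hB : ∀ t, |g t| ≤ B) (x : ℝ) :
    IntegrableOn (fun s => μ * exp (-μ * s) * g (x + s)) (Ioi 0) :=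
  integrableOn_mul_exp_neg_mul hμ (hg.comp (continuous_const_add x)) (fun s => hB (x + s)) 0

lemma expAverage_mem_Icc (hg : Continuous g) {m M : ℝ} (hgm : ∀ t, g t ∈ Icc m M) (x : ℝ) :
    expAverage μ g x ∈ Icc m M := by
  have hB : ∀ t, |g t| ≤ max |m| |M| := fun t => abs_le_max_abs_abs (hgm t).1 (hgm t).2
  have hint := integrableOn_mul_exp_neg_mul_comp_add hμ hg hB x
  have hexp := (exp_neg_integrableOn_Ioi 0 hμ).const_mul μ
  have hpos : ∀ s, 0 ≤ μ * exp (-μ * s) := fun s => by positivity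
  constructor
  · calc m = ∫ s in Ioi 0, μ * exp (-μ * s) * m := by
          rw [integral_mul_const, integral_mul_exp_neg_mul_Ioi hμ, one_mul]
      _ ≤ expAverage μ g x := setIntegral_mono_on (hexp.mul_const m) hint measurableSet_Ioi
          fun s _ => mul_le_mul_of_nonneg_left (hgm (x + s)).1 (hpos s)
  · calc expAverage μ g x ≤ ∫ s in Ioi 0, μ * exp (-μ * s) * M :=
          setIntegral_mono_on hint (hexp.mul_const M) measurableSet_Ioi
            fun s _ => mul_le_mul_of_nonneg_left (hgm (x + s)).2 (hpos s)
      _ = M := by rw [integral_mul_const, integral_mul_exp_neg_mul_Ioi hμ, one_mul]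

lemma abs_expAverage_sub_le {h : ℝ → ℝ} (hg : Continuous g) (hh : Continuous h)
    (hgB : ∀ t, |g t| ≤ B) (hhB : ∀ t, |h t| ≤ B) {d : ℝ} (hd : ∀ t, |g t - h t| ≤ d) (x : ℝ) :
    |expAverage μ g x - expAverage μ h x| ≤ d := by
  have hsub : expAverage μ g x - expAverage μ h x = expAverage μ (fun t => g t - h t) x := by
    rw [expAverage, expAverage, expAverage, ← integral_sub
      (integrableOn_mul_exp_neg_mul_comp_add hμ hg hgB x)
      (integrableOn_mul_exp_neg_mul_comp_add hμ hh hhB x)]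
    simp only [mul_sub]
  rw [hsub, abs_le]
  exact expAverage_mem_Icc hμ (hg.sub hh) (fun t => abs_le.mp (hd t)) x

lemma tendsto_expAverage {l : Filter ℝ} [l.IsCountablyGenerated] (hg : Continuous g)
    (hB : ∀ t, |g t| ≤ B) {F : ℝ → ℝ} (hF : ∀ s, Tendsto (fun y => g (y + s)) l (𝓝 (F s))) :
    Tendsto (expAverage μ g) l (𝓝 (∫ s in Ioi 0, μ * exp (-μ * s) * F s)) := by
  refine tendsto_integral_filter_of_dominated_convergence (fun s => μ * exp (-μ * s) * B)
    (Eventually.of_forall fun y => ?_) (Eventually.of_forall fun y => ae_of_all _ fun s => ?_)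
    ((exp_neg_integrableOn_Ioi 0 hμ).const_mul μ |>.mul_const B)
    (ae_of_all _ fun s => (hF s).const_mul _)
  · exact (by fun_prop : Continuous fun s => μ * exp (-μ * s) * g (y + s)).aestronglyMeasurable
  · rw [norm_mul, Real.norm_of_nonneg (by positivity), Real.norm_eq_abs]
    exact mul_le_mul_of_nonneg_left (hB (y + s)) (by positivity)

lemma continuous_expAverage (hg : Continuous g) (hB : ∀ t, |g t| ≤ B) :
    Continuous (expAverage μ g) :=
  continuous_iff_continuousAt.mpr fun x =>
    tendsto_expAverage hμ hg hB fun s => (hg.comp (continuous_add_const s)).tendsto x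

lemma tendsto_expAverage_of_tendsto {l : Filter ℝ} [l.IsCountablyGenerated]
    (hl : ∀ s, Tendsto (fun y => y + s) l l) (hg : Continuous g) (hB : ∀ t, |g t| ≤ B) {c : ℝ}
    (hgc : Tendsto g l (𝓝 c)) : Tendsto (expAverage μ g) l (𝓝 c) := by
  have := tendsto_expAverage hμ hg hB fun s => hgc.comp (hl s)
  rwa [integral_mul_const, integral_mul_exp_neg_mul_Ioi hμ, one_mul] at this

lemma hasDerivAt_expAverage (hg : Continuous g) (hB : ∀ t, |g t| ≤ B) (x : ℝ) :
    HasDerivAt (expAverage μ g) (μ * (expAverage μ g x - g x)) x := by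
  set k : ℝ → ℝ := fun t => μ * exp (-μ * t) * g t
  have hrep : expAverage μ g = fun y => exp (μ * y) * ∫ t in Ioi y, k t := by
    ext y
    rw [← integral_const_mul, ← setIntegral_Ioi_zero_comp_add, expAverage]
    congr 1
    ext s
    simp only [k]
    rw [mul_add, exp_add, neg_mul μ y, exp_neg]
    field_simp
  have hk := hasDerivAt_setIntegral_Ioi (by fun_prop) (integrableOn_mul_exp_neg_mul hμ hg hB) x
  have he : HasDerivAt (fun y => exp (μ * y)) (exp (μ * x) * μ) x := by
    simpa using ((hasDerivAt_id x).const_mul μ).exp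
  rw [hrep]
  refine (he.mul hk).congr_deriv ?_
  simp only [k]
  rw [neg_mul μ x, exp_neg]
  field_simp
  ring

end ExpAverage

namespace AcousticHorizon

section HorizonMap

variable {a₀ C μ a : ℝ}

lemma sub_one_add_div_div_sub (hμ : μ ≠ 0) {u v : ℝ} (hu : u ≠ 0) (hv : v ≠ 0) :
    u - (1 + a / u) / μ - (v - (1 + a / v) / μ) = (u - v) * (1 + a / (μ * u * v)) := by
  field_simp
  ring

lemma pos_of_le_mul_sq (ha₀ : 0 < a₀) (h : a₀ ≤ C) (hμ : C ≤ μ * a₀ ^ 2) : 0 < μ :=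
  pos_of_mul_pos_left ((ha₀.trans_le h).trans_le hμ) (sq_nonneg a₀)

lemma one_add_div_mem_Icc (ha₀ : 0 < a₀) (hμ : C ≤ μ * a₀ ^ 2) (ha : a ∈ Icc (-C) (-a₀))
    {u v : ℝ} (hu : u ∈ Icc a₀ C) (hv : v ∈ Icc a₀ C) :
    1 + a / (μ * u * v) ∈ Icc 0 (1 - a₀ / (μ * C ^ 2)) := by
  have hμ₀ := pos_of_le_mul_sq ha₀ (neg_le_neg_iff.mp (ha.1.trans ha.2)) hμ
  have hw : 0 < μ * u * v := by have := ha₀.trans_le hu.1; have := ha₀.trans_le hv.1; positivity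
  have huv : μ * a₀ ^ 2 ≤ μ * u * v := by
    rw [mul_assoc, sq]
    exact mul_le_mul_of_nonneg_left (mul_le_mul hu.1 hv.1 ha₀.le (ha₀.le.trans hu.1)) hμ₀.le
  have huv' : μ * u * v ≤ μ * C ^ 2 := by
    rw [mul_assoc, sq]
    exact mul_le_mul_of_nonneg_left (mul_le_mul hu.2 hv.2 (ha₀.le.trans hv.1)
      (ha₀.le.trans (hu.1.trans hu.2))) hμ₀.le
  constructor
  · have := (le_div_iff₀ hw).mpr (by linarith [ha.1] : -1 * (μ * u * v) ≤ a)
    linarith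
  · have h1 : a / (μ * u * v) ≤ -a₀ / (μ * u * v) := div_le_div_of_nonneg_right ha.2 hw.le
    have h2 : a₀ / (μ * C ^ 2) ≤ a₀ / (μ * u * v) := div_le_div_of_nonneg_left ha₀.le hw huv'
    rw [neg_div] at h1
    linarith

lemma one_sub_div_mem_Ico (ha₀ : 0 < a₀) (h : a₀ ≤ C) (hμ : C ≤ μ * a₀ ^ 2) :
    1 - a₀ / (μ * C ^ 2) ∈ Ico 0 1 := by
  have hμ₀ := pos_of_le_mul_sq ha₀ h hμ
  have hC := ha₀.trans_le h
  refine ⟨sub_nonneg.mpr ((div_le_one (by positivity)).mpr ?_), sub_lt_self _ (by positivity)⟩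
  calc a₀ ≤ μ * a₀ ^ 2 := h.trans hμ
    _ ≤ μ * C ^ 2 := mul_le_mul_of_nonneg_left (pow_le_pow_left₀ ha₀.le h 2) hμ₀.le

/-- `u ↦ u - (1 + a / u) / μ`, made globally bounded and Lipschitz by first clamping `u`
to `[a₀, C]`. -/
noncomputable def horizonMap (h : a₀ ≤ C) (μ a u : ℝ) : ℝ :=
  (projIcc a₀ C h u : ℝ) - (1 + a / projIcc a₀ C h u) / μ

variable (h : a₀ ≤ C)

lemma horizonMap_of_mem {u : ℝ} (hu : u ∈ Icc a₀ C) :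
    horizonMap h μ a u = u - (1 + a / u) / μ := by
  rw [horizonMap, projIcc_of_mem h hu]

lemma horizonMap_projIcc (u : ℝ) : horizonMap h μ a (projIcc a₀ C h u) = horizonMap h μ a u := by
  rw [horizonMap, projIcc_val, horizonMap]

lemma mul_sub_horizonMap (hμ : μ ≠ 0) {u : ℝ} (hu : u ∈ Icc a₀ C) :
    μ * (u - horizonMap h μ a u) = a / u + 1 := by
  rw [horizonMap_of_mem h hu]
  field_simp
  ring

lemma horizonMap_neg_self (ha₀ : 0 < a₀) {L : ℝ} (hL : L ∈ Icc a₀ C) :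
    horizonMap h μ (-L) L = L := by
  rw [horizonMap_of_mem h hL, neg_div_self (ha₀.trans_le hL.1).ne']
  simp

lemma continuous_horizonMap (ha₀ : 0 < a₀) :
    Continuous fun p : ℝ × ℝ => horizonMap h μ p.1 p.2 := by
  have hp : Continuous fun u => (projIcc a₀ C h u : ℝ) :=
    continuous_subtype_val.comp continuous_projIcc
  have hne : ∀ p : ℝ × ℝ, (projIcc a₀ C h p.2 : ℝ) ≠ 0 := fun p =>
    (ha₀.trans_le (projIcc a₀ C h p.2).2.1).ne'
  exact (hp.comp continuous_snd).sub
    ((continuous_const.add (continuous_fst.div (hp.comp continuous_snd) hne)).div_const μ)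

lemma horizonMap_sub (ha₀ : 0 < a₀) (hμ : μ ≠ 0) (u v : ℝ) :
    horizonMap h μ a u - horizonMap h μ a v = ((projIcc a₀ C h u : ℝ) - projIcc a₀ C h v) *
      (1 + a / (μ * projIcc a₀ C h u * projIcc a₀ C h v)) :=
  sub_one_add_div_div_sub hμ (ha₀.trans_le (projIcc a₀ C h u).2.1).ne'
    (ha₀.trans_le (projIcc a₀ C h v).2.1).ne'

variable (ha₀ : 0 < a₀) (hμ : C ≤ μ * a₀ ^ 2) (ha : a ∈ Icc (-C) (-a₀))
include ha₀ hμ ha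

lemma abs_horizonMap_sub_le (u v : ℝ) :
    |horizonMap h μ a u - horizonMap h μ a v| ≤ (1 - a₀ / (μ * C ^ 2)) * |u - v| := by
  have hk := one_add_div_mem_Icc ha₀ hμ ha (projIcc a₀ C h u).2 (projIcc a₀ C h v).2
  rw [horizonMap_sub h ha₀ (pos_of_le_mul_sq ha₀ h hμ).ne', abs_mul, abs_of_nonneg hk.1, mul_comm]
  exact mul_le_mul hk.2 (abs_projIcc_sub_projIcc h) (abs_nonneg _) (hk.1.trans hk.2)

lemma monotone_horizonMap : Monotone (horizonMap h μ a) := fun u v huv => by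
  have hk := one_add_div_mem_Icc ha₀ hμ ha (projIcc a₀ C h v).2 (projIcc a₀ C h u).2
  have hp : (projIcc a₀ C h u : ℝ) ≤ projIcc a₀ C h v := monotone_projIcc h huv
  have := horizonMap_sub h ha₀ (a := a) (pos_of_le_mul_sq ha₀ h hμ).ne' v u
  nlinarith [hk.1]

lemma horizonMap_mem_Icc (u : ℝ) : horizonMap h μ a u ∈ Icc a₀ C := by
  have hμ₀ := pos_of_le_mul_sq ha₀ h hμ
  have hC : 0 < C := ha₀.trans_le h
  have hmono := monotone_horizonMap h ha₀ hμ ha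
  rw [← horizonMap_projIcc]
  constructor
  · refine le_trans ?_ (hmono (projIcc a₀ C h u).2.1)
    rw [horizonMap_of_mem h ⟨le_rfl, h⟩, le_sub_self_iff]
    refine div_nonpos_of_nonpos_of_nonneg ?_ hμ₀.le
    have : a / a₀ ≤ -1 := by rw [div_le_iff₀ ha₀]; linarith [ha.2]
    linarith
  · refine (hmono (projIcc a₀ C h u).2.2).trans ?_
    rw [horizonMap_of_mem h ⟨h, le_rfl⟩, sub_le_self_iff]
    refine div_nonneg ?_ hμ₀.le
    have : -1 ≤ a / C := by rw [le_div_iff₀ hC]; linarith [ha.1]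
    linarith

end HorizonMap

section HorizonOperator

variable {A : ℝ → ℝ} {a₀ C μ : ℝ} (h : a₀ ≤ C)

noncomputable def horizonOperator (h : a₀ ≤ C) (μ : ℝ) (A f : ℝ → ℝ) : ℝ → ℝ :=
  expAverage μ fun t => horizonMap h μ (A t) (f t)

lemma neg_mem_Icc_of_tendsto (hAC : ∀ t, A t ∈ Icc (-C) (-a₀)) {l : Filter ℝ} [l.NeBot] {c : ℝ}
    (hc : Tendsto A l (𝓝 c)) : -c ∈ Icc a₀ C := by
  have := isClosed_Icc.mem_of_tendsto hc (Eventually.of_forall hAC)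
  exact ⟨le_neg.mpr this.2, neg_le.mp this.1⟩

lemma continuous_horizonMap_comp (hA : Continuous A) (ha₀ : 0 < a₀) {f : ℝ → ℝ}
    (hf : Continuous f) : Continuous fun t => horizonMap h μ (A t) (f t) :=
  (continuous_horizonMap h ha₀).comp (hA.prodMk hf)

lemma abs_horizonMap_comp_le (ha₀ : 0 < a₀) (hμ : C ≤ μ * a₀ ^ 2)
    (hAC : ∀ t, A t ∈ Icc (-C) (-a₀)) (f : ℝ → ℝ) (t : ℝ) : |horizonMap h μ (A t) (f t)| ≤ C := by
  have hm := horizonMap_mem_Icc h ha₀ hμ (hAC t) (f t)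
  exact abs_le.mpr ⟨by linarith [hm.1], hm.2⟩

variable (hA : Continuous A) (ha₀ : 0 < a₀) (hμ : C ≤ μ * a₀ ^ 2)
  (hAC : ∀ t, A t ∈ Icc (-C) (-a₀))
include hA ha₀ hμ hAC

lemma horizonOperator_mem_Icc {f : ℝ → ℝ} (hf : Continuous f) (x : ℝ) :
    horizonOperator h μ A f x ∈ Icc a₀ C :=
  expAverage_mem_Icc (pos_of_le_mul_sq ha₀ h hμ) (continuous_horizonMap_comp h hA ha₀ hf)
    (fun t => horizonMap_mem_Icc h ha₀ hμ (hAC t) (f t)) x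

lemma continuous_horizonOperator {f : ℝ → ℝ} (hf : Continuous f) :
    Continuous (horizonOperator h μ A f) :=
  continuous_expAverage (pos_of_le_mul_sq ha₀ h hμ)
    (continuous_horizonMap_comp h hA ha₀ hf) (abs_horizonMap_comp_le h ha₀ hμ hAC f)

lemma abs_horizonOperator_sub_le {f g : ℝ → ℝ} (hf : Continuous f) (hg : Continuous g) {d : ℝ}
    (hd : ∀ t, |f t - g t| ≤ d) (x : ℝ) :
    |horizonOperator h μ A f x - horizonOperator h μ A g x| ≤ (1 - a₀ / (μ * C ^ 2)) * d :=
  abs_expAverage_sub_le (pos_of_le_mul_sq ha₀ h hμ)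
    (continuous_horizonMap_comp h hA ha₀ hf) (continuous_horizonMap_comp h hA ha₀ hg)
    (abs_horizonMap_comp_le h ha₀ hμ hAC f) (abs_horizonMap_comp_le h ha₀ hμ hAC g)
    (fun t => (abs_horizonMap_sub_le h ha₀ hμ (hAC t) (f t) (g t)).trans
      (mul_le_mul_of_nonneg_left (hd t) (one_sub_div_mem_Ico ha₀ h hμ).1)) x

lemma tendsto_horizonOperator {l : Filter ℝ} [l.IsCountablyGenerated]
    (hl : ∀ s, Tendsto (fun y => y + s) l l) {f : ℝ → ℝ} (hf : Continuous f) {L : ℝ}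
    (hL : L ∈ Icc a₀ C) (hAl : Tendsto A l (𝓝 (-L))) (hfl : Tendsto f l (𝓝 L)) :
    Tendsto (horizonOperator h μ A f) l (𝓝 L) := by
  refine tendsto_expAverage_of_tendsto (pos_of_le_mul_sq ha₀ h hμ) hl
    (continuous_horizonMap_comp h hA ha₀ hf) (abs_horizonMap_comp_le h ha₀ hμ hAC f) ?_
  have := ((continuous_horizonMap h (μ := μ) ha₀).tendsto (-L, L)).comp (hAl.prodMk_nhds hfl)
  rwa [horizonMap_neg_self h ha₀ hL] at this

lemma hasDerivAt_of_horizonOperator_eq {r : ℝ → ℝ} (hr : Continuous r)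
    (hfix : horizonOperator h μ A r = r) (x : ℝ) : HasDerivAt r (A x / r x + 1) x := by
  have hμ₀ := pos_of_le_mul_sq ha₀ h hμ
  have hrx : r x ∈ Icc a₀ C := hfix ▸ horizonOperator_mem_Icc h hA ha₀ hμ hAC hr x
  have := hasDerivAt_expAverage hμ₀ (continuous_horizonMap_comp h hA ha₀ hr)
    (abs_horizonMap_comp_le h ha₀ hμ hAC r) x
  rwa [← horizonOperator, hfix, mul_sub_horizonMap h hμ₀.ne' hrx] at this

lemma exists_fixedPoint_horizonOperator {a b : ℝ} (htop : Tendsto A atTop (𝓝 a))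
    (hbot : Tendsto A atBot (𝓝 b)) : ∃ r : ℝ → ℝ, Continuous r ∧ horizonOperator h μ A r = r ∧
      Tendsto r atTop (𝓝 (-a)) ∧ Tendsto r atBot (𝓝 (-b)) := by
  obtain ⟨hk₀, hk₁⟩ := one_sub_div_mem_Ico ha₀ h hμ
  let T : (ℝ →ᵇ ℝ) → ℝ →ᵇ ℝ := fun f =>
    .ofNormedAddCommGroup (horizonOperator h μ A f)
      (continuous_horizonOperator h hA ha₀ hμ hAC f.continuous) C fun x => by
        have := horizonOperator_mem_Icc h hA ha₀ hμ hAC f.continuous x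
        exact abs_le.mpr ⟨by linarith [this.1], this.2⟩
  have hT : ContractingWith ⟨_, hk₀⟩ T := by
    refine ⟨by exact_mod_cast hk₁, LipschitzWith.of_dist_le_mul fun f g => ?_⟩
    refine (BoundedContinuousFunction.dist_le (mul_nonneg hk₀ dist_nonneg)).mpr fun x => ?_
    exact abs_horizonOperator_sub_le h hA ha₀ hμ hAC f.continuous g.continuous
      (fun t => by rw [← Real.dist_eq]; exact BoundedContinuousFunction.dist_coe_le_dist t) x
  set S := {f : ℝ →ᵇ ℝ | Tendsto f atTop (𝓝 (-a))} ∩ {f | Tendsto f atBot (𝓝 (-b))}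
  have hS : IsClosed S := (BoundedContinuousFunction.isClosed_setOf_tendsto _ _).inter
    (BoundedContinuousFunction.isClosed_setOf_tendsto _ _)
  have hTS : MapsTo T S S := fun f hf =>
    ⟨tendsto_horizonOperator h hA ha₀ hμ hAC (fun s => tendsto_atTop_add_const_right _ s tendsto_id)
      f.continuous (neg_mem_Icc_of_tendsto hAC htop) (by rwa [neg_neg]) hf.1,
    tendsto_horizonOperator h hA ha₀ hμ hAC (fun s => tendsto_atBot_add_const_right _ s tendsto_id)
      f.continuous (neg_mem_Icc_of_tendsto hAC hbot) (by rwa [neg_neg]) hf.2⟩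
  let f₀ : ℝ →ᵇ ℝ := .ofNormedAddCommGroup (fun t => -A t) hA.neg C fun t => by
    rw [norm_neg, Real.norm_eq_abs]
    exact abs_le.mpr ⟨(hAC t).1, by linarith [(hAC t).2]⟩
  obtain ⟨r, hrS, hr, -⟩ := ContractingWith.exists_fixedPoint' hS.isComplete hTS (hT.restrict hTS)
    (x := f₀) ⟨htop.neg, hbot.neg⟩ (edist_ne_top _ _)
  exact ⟨r, r.continuous, congrArg (⇑) hr, hrS⟩

end HorizonOperator

end AcousticHorizon

open AcousticHorizon

theorem acoustic_black_hole_horizon_exists (A : ℝ → ℝ) (hA : ContDiff ℝ 1 A)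
    (a₀ : ℝ) (ha₀ : 0 < a₀) (hAneg : ∀ x, A x ≤ -a₀)
    (Aplus Aminus : ℝ)
    (hplus : Tendsto A atTop (nhds Aplus))
    (hminus : Tendsto A atBot (nhds Aminus)) :
    ∃ r₀ : ℝ → ℝ,
      (∀ x, 0 < r₀ x) ∧
      (∃ M, ∀ x, r₀ x ≤ M) ∧
      (∀ x, HasDerivAt r₀ (A x / r₀ x + 1) x) ∧
      Tendsto r₀ atTop (nhds (-Aplus)) ∧
      Tendsto r₀ atBot (nhds (-Aminus)) := by
  obtain ⟨C, hC⟩ := hA.continuous.exists_abs_le_of_tendsto hplus hminus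
  have hAC : ∀ t, A t ∈ Icc (-C) (-a₀) := fun t => ⟨(abs_le.mp (hC t)).1, hAneg t⟩
  have h : a₀ ≤ C := neg_le_neg_iff.mp ((hAC 0).1.trans (hAC 0).2)
  have hμ : C ≤ C / a₀ ^ 2 * a₀ ^ 2 := (div_mul_cancel₀ C (by positivity)).ge
  obtain ⟨r, hr, hfix, htop, hbot⟩ :=
    exists_fixedPoint_horizonOperator h hA.continuous ha₀ hμ hAC hplus hminus
  have hrC : ∀ x, r x ∈ Icc a₀ C := fun x =>
    hfix ▸ horizonOperator_mem_Icc h hA.continuous ha₀ hμ hAC hr x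
  exact ⟨r, fun x => ha₀.trans_le (hrC x).1, ⟨C, fun x => (hrC x).2⟩,
    hasDerivAt_of_horizonOperator_eq h hA.continuous ha₀ hμ hAC hr hfix, htop, hbot⟩
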